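/- arXiv:1707.01547 — 4 statements merged into one kernel-verified Lean document; each statement's English description precedes it below -/
import Mathlib

section
/- For all integers s ≥ 1 and t ≥ 1, setting r = s + 4, the domination number of the tree T_{s,t}^r equals r − 1, i.e., γ(T_{s,t}^r) = s + 3. -/
/-- A dominating set: every vertex is in `D` or adjacent to a vertex of `D`. -/
def IsDominatingSet {V : Type*} (G : SimpleGraph V) (D : Finset V) : Prop :=
  ∀ v : V, v ∈ D ∨ ∃ u ∈ D, G.Adj u v

/-- The domination number `γ(G)`: minimum cardinality of a dominating set. -/
noncomputable def dominationNumber {V : Type*} [Fintype V] (G : SimpleGraph V) : ℕ :=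
  sInf {n | ∃ D : Finset V, IsDominatingSet G D ∧ D.card = n}

/-- The tree `T_{s,t}^r` (with `r = s + 4`): a path `v₀v₁v₂v₃v₄` (the `Sum.inl`
vertices), pendant paths `v₂ pᵢ qᵢ` for `i = 1,…,s` and pendant vertices
`w₁,…,w_t` attached to `v₂`. -/
def Tst (s t : ℕ) : SimpleGraph (Fin 5 ⊕ Fin s ⊕ Fin s ⊕ Fin t) :=
  SimpleGraph.fromRel (fun a b =>
    match a, b with
    | Sum.inl i, Sum.inl j => (i : ℕ) + 1 = (j : ℕ)                 -- path edges vᵢ v_{i+1}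
    | Sum.inr (Sum.inl i), Sum.inr (Sum.inr (Sum.inl j)) => (i : ℕ) = (j : ℕ)  -- pᵢ qᵢ
    | Sum.inl i, Sum.inr (Sum.inl _) => (i : ℕ) = 2                 -- v₂ pᵢ
    | Sum.inl i, Sum.inr (Sum.inr (Sum.inr _)) => (i : ℕ) = 2       -- v₂ wⱼ
    | _, _ => False)


/-! The set `{v₁, v₂, v₄, p₁, …, p_s}` dominates `T_{s,t}^r`. Conversely the `s + 3` vertices
`q₁, …, q_s, v₀, v₄, w₁` have pairwise disjoint closed neighbourhoods, so every dominating set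
needs a separate vertex to dominate each of them. -/

section

variable {V : Type*} (G : SimpleGraph V)

def IsPacking {ι : Type*} (x : ι → V) : Prop :=
  ∀ i j u, (u = x i ∨ G.Adj u (x i)) → (u = x j ∨ G.Adj u (x j)) → i = j

variable {G}

lemma isDominatingSet_univ [Fintype V] : IsDominatingSet G Finset.univ :=
  fun v => .inl (Finset.mem_univ v)

lemma IsPacking.card_le_card {ι : Type*} [Fintype ι] {x : ι → V} (hx : IsPacking G x)
    {D : Finset V} (hD : IsDominatingSet G D) : Fintype.card ι ≤ D.card := by
  have hdom (i : ι) : ∃ u ∈ D, u = x i ∨ G.Adj u (x i) := by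
    rcases hD (x i) with h | ⟨u, hu, hadj⟩
    exacts [⟨x i, h, .inl rfl⟩, ⟨u, hu, .inr hadj⟩]
  choose f hfD hf using hdom
  have hinj : Function.Injective fun i => (⟨f i, hfD i⟩ : D) := fun i j hij =>
    hx i j (f i) (hf i) (by rw [show f i = f j from congrArg Subtype.val hij]; exact hf j)
  simpa using Fintype.card_le_of_injective _ hinj

variable [Fintype V]

lemma dominationNumber_le_card {D : Finset V} (hD : IsDominatingSet G D) :
    dominationNumber G ≤ D.card :=
  Nat.sInf_le ⟨D, hD, rfl⟩

lemma exists_isDominatingSet_card_eq_dominationNumber :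
    ∃ D : Finset V, IsDominatingSet G D ∧ D.card = dominationNumber G :=
  Nat.sInf_mem (s := {n | ∃ D : Finset V, IsDominatingSet G D ∧ D.card = n})
    ⟨_, Finset.univ, isDominatingSet_univ, rfl⟩

lemma IsPacking.card_le_dominationNumber {ι : Type*} [Fintype ι] {x : ι → V}
    (hx : IsPacking G x) : Fintype.card ι ≤ dominationNumber G := by
  obtain ⟨D, hD, hcard⟩ := exists_isDominatingSet_card_eq_dominationNumber (G := G)
  exact hcard ▸ hx.card_le_card hD

end

namespace Tst

variable (s t : ℕ)

/-- `{v₁, v₂, v₄, p₁, …, p_s}`. -/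
def dominatingSet : Finset (Fin 5 ⊕ Fin s ⊕ Fin s ⊕ Fin t) :=
  ({1, 2, 4} : Finset (Fin 5)).disjSum (Finset.univ.disjSum ∅)

lemma card_dominatingSet : (dominatingSet s t).card = s + 3 := by
  simp [dominatingSet]
  omega

lemma isDominatingSet_dominatingSet : IsDominatingSet (Tst s t) (dominatingSet s t) := by
  rintro (v | p | q | w)
  · fin_cases v
    · exact .inr ⟨.inl 1, by simp [dominatingSet], by simp [Tst]⟩
    · exact .inl (by simp [dominatingSet])
    · exact .inl (by simp [dominatingSet])
    · exact .inr ⟨.inl 4, by simp [dominatingSet], by simp [Tst]⟩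
    · exact .inl (by simp [dominatingSet])
  · exact .inl (by simp [dominatingSet])
  · exact .inr ⟨.inr (.inl q), by simp [dominatingSet], by simp [Tst]⟩
  · exact .inr ⟨.inl 2, by simp [dominatingSet], by simp [Tst]⟩

/-- `q₁, …, q_s, v₀, v₄, w₁`. -/
def packing (ht : 1 ≤ t) : Fin s ⊕ Fin 3 → Fin 5 ⊕ Fin s ⊕ Fin s ⊕ Fin t
  | .inl i => .inr (.inr (.inl i))
  | .inr 0 => .inl 0
  | .inr 1 => .inl 4
  | .inr 2 => .inr (.inr (.inr ⟨0, ht⟩))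

lemma isPacking_packing (ht : 1 ≤ t) : IsPacking (Tst s t) (packing s t ht) := by
  rintro (i | i) (j | j) (u | u | u | u) hi hj <;> try fin_cases i
  all_goals try fin_cases j
  all_goals simp [packing, Tst] at hi hj ⊢ <;> omega

end Tst

theorem dominationNumber_Tst_general (s t : ℕ) (ht : 1 ≤ t) :
    dominationNumber (Tst s t) = s + 3 := by
  apply le_antisymm
  · exact Tst.card_dominatingSet s t ▸
      dominationNumber_le_card (Tst.isDominatingSet_dominatingSet s t)
  · simpa using (Tst.isPacking_packing s t ht).card_le_dominationNumber

/-- For all integers `s, t ≥ 1`, with `r = s + 4`, the domination number of the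
tree `T_{s,t}^r` equals `r - 1 = s + 3`. -/
theorem dominationNumber_Tst (s t : ℕ) (hs : 1 ≤ s) (ht : 1 ≤ t) :
    dominationNumber (Tst s t) = s + 3 :=
  dominationNumber_Tst_general s t ht
end

section
/- For all integers s ≥ 1 and t ≥ 1, setting r = s + 4, the 2-packing number of the tree T_{s,t}^r equals r, i.e., ν₂(T_{s,t}^r) = s + 4. -/
/-- A 2-packing: a set of edges of `G` such that no three (pairwise distinct)
edges share a common vertex. -/
def IsTwoPacking {V : Type*} (G : SimpleGraph V) (R : Finset (Sym2 V)) : Prop :=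
  (↑R : Set (Sym2 V)) ⊆ G.edgeSet ∧
  ∀ e₁ ∈ R, ∀ e₂ ∈ R, ∀ e₃ ∈ R, ∀ v : V,
    v ∈ e₁ → v ∈ e₂ → v ∈ e₃ → (e₁ = e₂ ∨ e₁ = e₃ ∨ e₂ = e₃)

/-- The 2-packing number `ν₂(G)`: maximum cardinality of a 2-packing. -/
noncomputable def twoPackingNumber {V : Type*} [Fintype V] (G : SimpleGraph V) : ℕ :=
  sSup {n | ∃ R : Finset (Sym2 V), IsTwoPacking G R ∧ R.card = n}

namespace TstAux

variable {s t : ℕ}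

/-- The vertex type of `Tst s t`. -/
abbrev VV (s t : ℕ) := Fin 5 ⊕ Fin s ⊕ Fin s ⊕ Fin t

/-- Classification of the edges of `Tst s t`. -/
lemma edge_cases {a b : VV s t} (h : (Tst s t).Adj a b) :
    (∃ i j : Fin 5, (i : ℕ) + 1 = (j : ℕ) ∧ s(a,b) = s(Sum.inl i, Sum.inl j)) ∨
    (∃ i : Fin s, s(a,b) = s(Sum.inr (Sum.inl i), Sum.inr (Sum.inr (Sum.inl i)))) ∨
    (∃ i : Fin s, s(a,b) = s(Sum.inl 2, Sum.inr (Sum.inl i))) ∨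
    (∃ j : Fin t, s(a,b) = s(Sum.inl 2, Sum.inr (Sum.inr (Sum.inr j)))) := by
  rw [Tst, SimpleGraph.fromRel_adj] at h
  obtain ⟨hne, h | h⟩ := h <;>
    rcases a with i | i | i | i <;> rcases b with j | j | j | j <;> simp only [] at h
  · exact Or.inl ⟨i, j, h, rfl⟩
  · have : i = 2 := by rwa [Fin.ext_iff]
    subst this; exact Or.inr (Or.inr (Or.inl ⟨_, rfl⟩))
  · have : i = 2 := by rwa [Fin.ext_iff]
    subst this; exact Or.inr (Or.inr (Or.inr ⟨_, rfl⟩))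
  · have : i = j := by rwa [Fin.ext_iff]
    subst this; exact Or.inr (Or.inl ⟨_, rfl⟩)
  · exact Or.inl ⟨j, i, h, Sym2.eq_swap⟩
  · have : j = 2 := by rwa [Fin.ext_iff]
    subst this; exact Or.inr (Or.inr (Or.inl ⟨_, Sym2.eq_swap⟩))
  · have : j = i := by rwa [Fin.ext_iff]
    subst this; exact Or.inr (Or.inl ⟨_, Sym2.eq_swap⟩)
  · have : j = 2 := by rwa [Fin.ext_iff]
    subst this; exact Or.inr (Or.inr (Or.inr ⟨_, Sym2.eq_swap⟩))

/-- The optimal 2-packing: the four path edges plus all edges `pᵢ qᵢ`. -/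
def R₀ (s t : ℕ) : Finset (Sym2 (VV s t)) :=
  ({s(Sum.inl 0, Sum.inl 1), s(Sum.inl 1, Sum.inl 2), s(Sum.inl 2, Sum.inl 3),
    s(Sum.inl 3, Sum.inl 4)} : Finset (Sym2 (VV s t))) ∪
  Finset.univ.image (fun i : Fin s => s(Sum.inr (Sum.inl i), Sum.inr (Sum.inr (Sum.inl i))))

lemma card_R₀ : (R₀ s t).card = s + 4 := by
  have hc4 : ({s(Sum.inl 0, Sum.inl 1), s(Sum.inl 1, Sum.inl 2), s(Sum.inl 2, Sum.inl 3),
      s(Sum.inl 3, Sum.inl 4)} : Finset (Sym2 (VV s t))).card = 4 := by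
    rw [Finset.card_insert_of_notMem, Finset.card_insert_of_notMem,
      Finset.card_insert_of_notMem, Finset.card_singleton] <;>
      simp [Sym2.eq_iff, Fin.ext_iff] <;> decide
  rw [R₀, Finset.card_union_of_disjoint, Finset.card_image_of_injective]
  · rw [hc4, Finset.card_univ, Fintype.card_fin]
    omega
  · intro i j hij
    simp [Sym2.eq_iff] at hij
    exact hij
  · simp [Finset.disjoint_left, Sym2.eq_iff]

lemma mem_R₀_cases {e : Sym2 (VV s t)} (he : e ∈ R₀ s t) :
    e = s(Sum.inl 0, Sum.inl 1) ∨ e = s(Sum.inl 1, Sum.inl 2) ∨ e = s(Sum.inl 2, Sum.inl 3) ∨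
    e = s(Sum.inl 3, Sum.inl 4) ∨
    ∃ i : Fin s, e = s(Sum.inr (Sum.inl i), Sum.inr (Sum.inr (Sum.inl i))) := by
  simp only [R₀, Finset.mem_union, Finset.mem_insert, Finset.mem_singleton,
    Finset.mem_image, Finset.mem_univ, true_and] at he
  rcases he with (h|h|h|h) | ⟨i, h⟩ <;>
    [skip; skip; skip; skip; exact Or.inr (Or.inr (Or.inr (Or.inr ⟨i, h.symm⟩)))] <;> tauto

/-- For every vertex `v` there are (at most) two edges of `R₀` containing `v`. -/
lemma two_per_vertex (v : VV s t) : ∃ a b, ∀ e ∈ R₀ s t, v ∈ e → e = a ∨ e = b := by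
  rcases v with k | i | i | j
  · fin_cases k
    · exact ⟨s(Sum.inl 0, Sum.inl 1), s(Sum.inl 0, Sum.inl 1), by
        intro e he hv
        rcases mem_R₀_cases he with rfl|rfl|rfl|rfl|⟨i,rfl⟩ <;>
          simp_all [Sym2.mem_iff, Fin.ext_iff] <;> revert hv <;> decide⟩
    · exact ⟨s(Sum.inl 0, Sum.inl 1), s(Sum.inl 1, Sum.inl 2), by
        intro e he hv
        rcases mem_R₀_cases he with rfl|rfl|rfl|rfl|⟨i,rfl⟩ <;>
          simp_all [Sym2.mem_iff, Fin.ext_iff] <;> revert hv <;> decide⟩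
    · exact ⟨s(Sum.inl 1, Sum.inl 2), s(Sum.inl 2, Sum.inl 3), by
        intro e he hv
        rcases mem_R₀_cases he with rfl|rfl|rfl|rfl|⟨i,rfl⟩ <;>
          simp_all [Sym2.mem_iff, Fin.ext_iff] <;> revert hv <;> decide⟩
    · exact ⟨s(Sum.inl 2, Sum.inl 3), s(Sum.inl 3, Sum.inl 4), by
        intro e he hv
        rcases mem_R₀_cases he with rfl|rfl|rfl|rfl|⟨i,rfl⟩ <;>
          simp_all [Sym2.mem_iff, Fin.ext_iff] <;> revert hv <;> decide⟩
    · exact ⟨s(Sum.inl 3, Sum.inl 4), s(Sum.inl 3, Sum.inl 4), by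
        intro e he hv
        rcases mem_R₀_cases he with rfl|rfl|rfl|rfl|⟨i,rfl⟩ <;>
          simp_all [Sym2.mem_iff, Fin.ext_iff] <;> revert hv <;> decide⟩
  · exact ⟨s(Sum.inr (Sum.inl i), Sum.inr (Sum.inr (Sum.inl i))),
      s(Sum.inr (Sum.inl i), Sum.inr (Sum.inr (Sum.inl i))), by
        intro e he hv
        rcases mem_R₀_cases he with rfl|rfl|rfl|rfl|⟨i',rfl⟩ <;>
          simp_all [Sym2.mem_iff, Fin.ext_iff, Sym2.eq_iff]⟩
  · exact ⟨s(Sum.inr (Sum.inl i), Sum.inr (Sum.inr (Sum.inl i))),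
      s(Sum.inr (Sum.inl i), Sum.inr (Sum.inr (Sum.inl i))), by
        intro e he hv
        rcases mem_R₀_cases he with rfl|rfl|rfl|rfl|⟨i',rfl⟩ <;>
          simp_all [Sym2.mem_iff, Fin.ext_iff, Sym2.eq_iff]⟩
  · exact ⟨s(Sum.inl 0, Sum.inl 1), s(Sum.inl 0, Sum.inl 1), by
        intro e he hv
        rcases mem_R₀_cases he with rfl|rfl|rfl|rfl|⟨i',rfl⟩ <;>
          simp_all [Sym2.mem_iff, Fin.ext_iff]⟩

lemma packing_R₀ : IsTwoPacking (Tst s t) (R₀ s t) := by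
  constructor
  · intro e he
    rw [Finset.mem_coe] at he
    rcases mem_R₀_cases he with rfl|rfl|rfl|rfl|⟨i,rfl⟩ <;>
      simp [SimpleGraph.mem_edgeSet, Tst, SimpleGraph.fromRel_adj] <;> decide
  · intro e₁ h₁ e₂ h₂ e₃ h₃ v hv₁ hv₂ hv₃
    obtain ⟨a, b, hab⟩ := two_per_vertex v
    have c₁ := hab e₁ h₁ hv₁
    have c₂ := hab e₂ h₂ hv₂
    have c₃ := hab e₃ h₃ hv₃
    rcases c₁ with rfl|rfl <;> rcases c₂ with rfl|rfl <;> rcases c₃ with rfl|rfl <;>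
      first
        | exact Or.inl rfl
        | exact Or.inr (Or.inl rfl)
        | exact Or.inr (Or.inr rfl)

/-- Upper bound: any 2-packing of `Tst s t` has at most `s + 4` edges. -/
lemma upper {R : Finset (Sym2 (VV s t))} (h : IsTwoPacking (Tst s t) R) :
    R.card ≤ s + 4 := by
  classical
  have hsplit := Finset.card_filter_add_card_filter_not
    (s := R) (p := fun e => (Sum.inl 2 : VV s t) ∈ e)
  have h2 : (R.filter (fun e => (Sum.inl 2 : VV s t) ∈ e)).card ≤ 2 := by
    by_contra hc
    rw [not_le] at hc
    rw [Finset.two_lt_card] at hc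
    obtain ⟨e₁, he₁, e₂, he₂, e₃, he₃, h12, h13, h23⟩ := hc
    rw [Finset.mem_filter] at he₁ he₂ he₃
    rcases h.2 e₁ he₁.1 e₂ he₂.1 e₃ he₃.1 (Sum.inl 2) he₁.2 he₂.2 he₃.2 with
      hh | hh | hh <;> tauto
  set C : Finset (Sym2 (VV s t)) :=
    ({s(Sum.inl 0, Sum.inl 1), s(Sum.inl 3, Sum.inl 4)} : Finset (Sym2 (VV s t))) ∪
    Finset.univ.image (fun i : Fin s => s(Sum.inr (Sum.inl i), Sum.inr (Sum.inr (Sum.inl i))))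
    with hC
  have h3 : R.filter (fun e => ¬ (Sum.inl 2 : VV s t) ∈ e) ⊆ C := by
    intro e he
    rw [Finset.mem_filter] at he
    obtain ⟨heR, hnv⟩ := he
    have hedge : e ∈ (Tst s t).edgeSet := h.1 heR
    revert hedge hnv
    induction e using Sym2.ind with
    | _ a b =>
      intro hnv hedge
      rw [SimpleGraph.mem_edgeSet] at hedge
      rcases edge_cases hedge with ⟨i, j, hij, hab⟩ | ⟨i, hab⟩ | ⟨i, hab⟩ | ⟨j, hab⟩
      · rw [hab] at hnv ⊢
        simp only [Sym2.mem_iff, not_or] at hnv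
        have hi2 : (i : ℕ) ≠ 2 := fun hh => hnv.1 (by
          apply congrArg Sum.inl; rw [Fin.ext_iff]; exact hh.symm)
        have hj2 : (j : ℕ) ≠ 2 := fun hh => hnv.2 (by
          apply congrArg Sum.inl; rw [Fin.ext_iff]; exact hh.symm)
        have h5i := i.isLt
        have h5j := j.isLt
        have : ((i : ℕ) = 0 ∧ (j : ℕ) = 1) ∨ ((i : ℕ) = 3 ∧ (j : ℕ) = 4) := by omega
        rcases this with ⟨hi, hj⟩ | ⟨hi, hj⟩
        · have hi' : i = 0 := by rw [Fin.ext_iff]; exact hi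
          have hj' : j = 1 := by rw [Fin.ext_iff]; exact hj
          rw [hi', hj']
          simp [hC]
        · have hi' : i = 3 := by rw [Fin.ext_iff]; exact hi
          have hj' : j = 4 := by rw [Fin.ext_iff]; exact hj
          rw [hi', hj']
          simp [hC]
      · rw [hab]
        simp [hC]
      · exfalso; rw [hab] at hnv; exact hnv (Sym2.mem_mk_left _ _)
      · exfalso; rw [hab] at hnv; exact hnv (Sym2.mem_mk_left _ _)
  have h4 : (R.filter (fun e => ¬ (Sum.inl 2 : VV s t) ∈ e)).card ≤ s + 2 := by
    calc (R.filter (fun e => ¬ (Sum.inl 2 : VV s t) ∈ e)).card ≤ C.card :=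
          Finset.card_le_card h3
      _ ≤ 2 + s := by
          refine le_trans (Finset.card_union_le _ _) ?_
          gcongr
          · exact le_trans (Finset.card_insert_le _ _) (by simp)
          · exact le_trans Finset.card_image_le (by simp)
      _ = s + 2 := by omega
  omega

end TstAux

/-- For all integers `s, t ≥ 1`, with `r = s + 4`, the 2-packing number of the
tree `T_{s,t}^r` equals `r = s + 4`. -/
theorem twoPackingNumber_Tst (s t : ℕ) (hs : 1 ≤ s) (ht : 1 ≤ t) :
    twoPackingNumber (Tst s t) = s + 4 := by
  have hub : ∀ n ∈ {n | ∃ R : Finset (Sym2 (TstAux.VV s t)),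
      IsTwoPacking (Tst s t) R ∧ R.card = n}, n ≤ s + 4 := by
    rintro n ⟨R, hR, rfl⟩
    exact TstAux.upper hR
  apply le_antisymm
  · exact csSup_le ⟨0, ⟨∅, ⟨by simp [Set.subset_def], by simp⟩, rfl⟩⟩ hub
  · exact le_csSup ⟨s + 4, hub⟩ ⟨TstAux.R₀ s t, TstAux.packing_R₀, TstAux.card_R₀⟩
end

section
/- Let G be a finite connected graph with |E(G)| > ν₂(G) and ν₂(G) ≥ 5, and let R be a maximum 2-packing of G (that is, |R| = ν₂(G)). If the subgraph G[R] is connected, then γ(G) ≤ ν₂(G) − 2. -/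
/-- The edge-induced subgraph `G[R]`: its vertices are the endpoints of the
edges of `R` (that are edges of `G`), and its edges are the edges of `R`. -/
def edgeInducedSubgraph {V : Type*} (G : SimpleGraph V) (R : Set (Sym2 V)) : G.Subgraph where
  verts := {v | ∃ e ∈ R ∩ G.edgeSet, v ∈ e}
  Adj a b := s(a, b) ∈ R ∧ G.Adj a b
  adj_sub h := h.2
  edge_vert h := ⟨s(_, _), ⟨h.1, h.2⟩, Sym2.mem_mk_left _ _⟩
  symm := ⟨fun a b h => ⟨by rw [Sym2.eq_swap]; exact h.1, h.2.symm⟩⟩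

/-!
Every vertex has degree at most 2 in `G[R]`, so the connected graph `G[R]` is a cycle on `ν₂`
vertices or a path on `ν₂ + 1` vertices. By maximality of `R`, every neighbour of a vertex of
degree at most 1 in `G[R]` has degree 2 there.

On a cycle, the vertices having a neighbour outside `G[R]` contain no edge `uv` of `R`: with
outside neighbours `x` of `u` and `y` of `v`, replacing `uv` by `ux` and `vy` would enlarge `R`.
So two cycle vertices `a`, `b` have no outside neighbour, and the other `ν₂ - 2` cycle vertices
dominate `G`.

On a path, the `ν₂ - 1` inner vertices dominate `G`, and an inner vertex that is not the only
neighbour of some vertex can be dropped. If every inner vertex `v` is the only neighbour of some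
vertex `p v`, then the edges `v (p v)` together with two disjoint edges of `R` between inner
vertices form a 2-packing with `ν₂ + 1` edges, which is impossible.
-/

open Finset

section TwoPacking

variable {V : Type*}

lemma SimpleGraph.Subgraph.Connected.verts_subset_of_adj_closed {G : SimpleGraph V}
    {H : G.Subgraph} (hH : H.Connected) {T : Set V} (hT : ∀ ⦃a b⦄, H.Adj a b → a ∈ T → b ∈ T)
    {a : V} (ha : a ∈ H.verts) (haT : a ∈ T) : H.verts ⊆ T := by
  intro b hb
  obtain ⟨p⟩ := hH.preconnected ⟨a, ha⟩ ⟨b, hb⟩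
  suffices ∀ {x y : H.verts}, H.coe.Walk x y → (x : V) ∈ T → (y : V) ∈ T from this p haT
  intro x y p
  induction p with
  | nil => exact id
  | cons hadj _ ih => exact fun hx => ih (hT hadj hx)

structure IsMaximumTwoPacking (G : SimpleGraph V) (R : Finset (Sym2 V)) : Prop where
  isTwoPacking : IsTwoPacking G R
  card_le : ∀ R', IsTwoPacking G R' → #R' ≤ #R

lemma IsTwoPacking.card_le_twoPackingNumber [Fintype V] {G : SimpleGraph V}
    {R : Finset (Sym2 V)} (hR : IsTwoPacking G R) : #R ≤ twoPackingNumber G :=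
  le_csSup ⟨#(univ : Finset (Sym2 V)), fun _ ⟨S, _, hS⟩ => hS ▸ card_le_univ S⟩ ⟨R, hR, rfl⟩

lemma IsTwoPacking.adj {G : SimpleGraph V} {R : Finset (Sym2 V)} {a b : V} (hR : IsTwoPacking G R)
    (h : s(a, b) ∈ R) : G.Adj a b :=
  hR.1 h

section edgeDegree

variable [DecidableEq V] {R S : Finset (Sym2 V)} {e : Sym2 V} {a b c d v : V}

def edgeDegree (R : Finset (Sym2 V)) (v : V) : ℕ := #{e ∈ R | v ∈ e}

lemma edgeDegree_pos (he : e ∈ R) (hv : v ∈ e) : 0 < edgeDegree R v :=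
  card_pos.mpr ⟨e, mem_filter.mpr ⟨he, hv⟩⟩

lemma exists_mem_of_edgeDegree_pos (h : 0 < edgeDegree R v) : ∃ w, s(v, w) ∈ R := by
  obtain ⟨e, he⟩ := card_pos.mp h
  rw [mem_filter] at he
  obtain ⟨w, rfl⟩ := Sym2.mem_iff_exists.mp he.2
  exact ⟨w, he.1⟩

lemma exists_ne_of_edgeDegree_eq_two (h : edgeDegree R v = 2) :
    ∃ c d, c ≠ d ∧ s(v, c) ∈ R ∧ s(v, d) ∈ R := by
  obtain ⟨e₁, e₂, hne, he⟩ := card_eq_two.mp h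
  have h₁ : e₁ ∈ {e ∈ R | v ∈ e} := he ▸ mem_insert_self _ _
  have h₂ : e₂ ∈ {e ∈ R | v ∈ e} := he ▸ mem_insert_of_mem (mem_singleton_self _)
  rw [mem_filter] at h₁ h₂
  obtain ⟨c, rfl⟩ := Sym2.mem_iff_exists.mp h₁.2
  obtain ⟨d, rfl⟩ := Sym2.mem_iff_exists.mp h₂.2
  exact ⟨c, d, fun hcd => hne (hcd ▸ rfl), h₁.1, h₂.1⟩

lemma eq_of_edgeDegree_le_one (h : edgeDegree R a ≤ 1) (hb : s(a, b) ∈ R) (hc : s(a, c) ∈ R) :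
    b = c :=
  Sym2.congr_right.mp <| card_le_one.mp h _ (mem_filter.mpr ⟨hb, Sym2.mem_mk_left _ _⟩) _
    (mem_filter.mpr ⟨hc, Sym2.mem_mk_left _ _⟩)

lemma eq_or_eq_of_edgeDegree_le_two (h : edgeDegree R a ≤ 2) (hcd : c ≠ d) (hc : s(a, c) ∈ R)
    (hd : s(a, d) ∈ R) (hb : s(a, b) ∈ R) : b = c ∨ b = d := by
  by_contra! hbcd
  have : 2 < edgeDegree R a := two_lt_card.mpr
    ⟨_, mem_filter.mpr ⟨hb, Sym2.mem_mk_left _ _⟩, _, mem_filter.mpr ⟨hc, Sym2.mem_mk_left _ _⟩,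
      _, mem_filter.mpr ⟨hd, Sym2.mem_mk_left _ _⟩, mt Sym2.congr_right.mp hbcd.1,
      mt Sym2.congr_right.mp hbcd.2, mt Sym2.congr_right.mp hcd⟩
  omega

lemma edgeDegree_insert (he : e ∉ S) (v : V) :
    edgeDegree (insert e S) v = edgeDegree S v + if v ∈ e then 1 else 0 := by
  unfold edgeDegree
  rw [filter_insert]
  split_ifs
  · exact card_insert_of_notMem fun h => he (mem_filter.mp h).1
  · rfl

lemma edgeDegree_union_le (v : V) : edgeDegree (R ∪ S) v ≤ edgeDegree R v + edgeDegree S v := by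
  unfold edgeDegree
  rw [filter_union]
  exact card_union_le _ _

lemma sum_edgeDegree [Fintype V] (h : ∀ e ∈ R, ¬ e.IsDiag) : ∑ v, edgeDegree R v = 2 * #R := by
  simp only [edgeDegree, card_filter]
  rw [sum_comm, mul_comm, ← smul_eq_mul, ← sum_const]
  refine sum_congr rfl fun e he => ?_
  rw [← card_filter, ← Sym2.card_toFinset_of_not_isDiag e (h e he)]
  congr 1
  ext
  simp [Sym2.mem_toFinset]

lemma card_le_sum_edgeDegree {T : Finset V} (hS : S ⊆ R) (h : ∀ e ∈ S, ∃ t ∈ T, t ∈ e) :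
    #S ≤ ∑ t ∈ T, edgeDegree R t :=
  calc #S ≤ #(T.biUnion fun t => {e ∈ R | t ∈ e}) := card_le_card fun e he => by
        obtain ⟨t, ht, hte⟩ := h e he
        exact mem_biUnion.mpr ⟨t, ht, mem_filter.mpr ⟨hS he, hte⟩⟩
    _ ≤ _ := card_biUnion_le

end edgeDegree

section IsTwoPacking

variable [DecidableEq V] {G : SimpleGraph V} {R M N : Finset (Sym2 V)} {a b u v x y : V}

lemma IsTwoPacking.edgeDegree_le_two (hR : IsTwoPacking G R) (v : V) : edgeDegree R v ≤ 2 := by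
  by_contra! h
  obtain ⟨e₁, h₁, e₂, h₂, e₃, h₃, h₁₂, h₁₃, h₂₃⟩ := two_lt_card.mp h
  simp only [mem_filter] at h₁ h₂ h₃
  rcases hR.2 e₁ h₁.1 e₂ h₂.1 e₃ h₃.1 v h₁.2 h₂.2 h₃.2 with h | h | h <;> contradiction

lemma mem_edgeInducedSubgraph_verts_iff (hR : (↑R : Set (Sym2 V)) ⊆ G.edgeSet) {v : V} :
    v ∈ (edgeInducedSubgraph G ↑R).verts ↔ 0 < edgeDegree R v := by
  refine ⟨fun ⟨e, he, hv⟩ => edgeDegree_pos he.1 hv, fun h => ?_⟩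
  obtain ⟨w, hw⟩ := exists_mem_of_edgeDegree_pos h
  exact ⟨_, ⟨hw, hR hw⟩, Sym2.mem_mk_left v w⟩

lemma isTwoPacking_iff :
    IsTwoPacking G R ↔ (↑R : Set (Sym2 V)) ⊆ G.edgeSet ∧ ∀ v, edgeDegree R v ≤ 2 := by
  refine ⟨fun hR => ⟨hR.1, hR.edgeDegree_le_two⟩, fun ⟨hsub, hdeg⟩ => ⟨hsub, ?_⟩⟩
  intro e₁ h₁ e₂ h₂ e₃ h₃ v hv₁ hv₂ hv₃
  by_contra! hne
  have : 2 < edgeDegree R v := two_lt_card.mpr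
    ⟨e₁, mem_filter.mpr ⟨h₁, hv₁⟩, e₂, mem_filter.mpr ⟨h₂, hv₂⟩, e₃, mem_filter.mpr ⟨h₃, hv₃⟩, hne⟩
  exact (hdeg v).not_gt this

lemma isTwoPacking_union (hM : (↑M : Set (Sym2 V)) ⊆ G.edgeSet)
    (hN : (↑N : Set (Sym2 V)) ⊆ G.edgeSet)
    (hM₁ : ∀ v, edgeDegree M v ≤ 1) (hN₁ : ∀ v, edgeDegree N v ≤ 1) : IsTwoPacking G (M ∪ N) :=
  isTwoPacking_iff.mpr ⟨by rw [coe_union]; exact Set.union_subset hM hN,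
    fun v => (edgeDegree_union_le v).trans (by linarith [hM₁ v, hN₁ v])⟩

lemma IsTwoPacking.card_le_two_mul_card_of_forall_exists_mem {T : Finset V} (hR : IsTwoPacking G R)
    (h : ∀ e ∈ R, ∃ t ∈ T, t ∈ e) : #R ≤ 2 * #T :=
  calc #R ≤ ∑ t ∈ T, edgeDegree R t := card_le_sum_edgeDegree subset_rfl h
    _ ≤ ∑ _t ∈ T, 2 := sum_le_sum fun t _ => hR.edgeDegree_le_two t
    _ = 2 * #T := by rw [sum_const, smul_eq_mul, mul_comm]

lemma IsMaximumTwoPacking.edgeDegree_eq_two_of_adj_of_notMem (hR : IsMaximumTwoPacking G R)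
    (hab : G.Adj a b) (h : s(a, b) ∉ R) : edgeDegree R a = 2 ∨ edgeDegree R b = 2 := by
  by_contra! hlt
  have ha := hR.isTwoPacking.edgeDegree_le_two a
  have hb := hR.isTwoPacking.edgeDegree_le_two b
  have hins : IsTwoPacking G (insert s(a, b) R) := by
    refine isTwoPacking_iff.mpr ⟨?_, fun v => ?_⟩
    · rw [coe_insert]
      exact Set.insert_subset hab hR.isTwoPacking.1
    · rw [edgeDegree_insert h]
      split_ifs with hv
      · rcases Sym2.mem_iff.mp hv with rfl | rfl <;> omega
      · simpa using hR.isTwoPacking.edgeDegree_le_two v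
  have := hR.card_le _ hins
  rw [card_insert_of_notMem h] at this
  omega

lemma IsMaximumTwoPacking.exists_mem_forall_adj_edgeDegree_ne_zero
    (hR : IsMaximumTwoPacking G R) {e : Sym2 V} (he : e ∈ R) :
    ∃ t ∈ e, ∀ x, G.Adj t x → edgeDegree R x ≠ 0 := by
  induction e using Sym2.ind with | h u v => ?_
  by_contra! hnbr
  obtain ⟨x, hux, hx⟩ := hnbr u (Sym2.mem_mk_left u v)
  obtain ⟨y, hvy, hy⟩ := hnbr v (Sym2.mem_mk_right u v)
  have hR₂ := hR.isTwoPacking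
  have hu := edgeDegree_pos he (Sym2.mem_mk_left u v)
  have hne : u ≠ v := (hR₂.adj he).ne
  have hvy_notMem : s(v, y) ∉ R.erase s(u, v) := fun h =>
    (edgeDegree_pos (mem_of_mem_erase h) (Sym2.mem_mk_right v y)).ne' hy
  have hux_notMem : s(u, x) ∉ insert s(v, y) (R.erase s(u, v)) := by
    rw [mem_insert, Sym2.eq_iff]
    rintro ((⟨rfl, -⟩ | ⟨rfl, -⟩) | h)
    · exact hne rfl
    · omega
    · exact (edgeDegree_pos (mem_of_mem_erase h) (Sym2.mem_mk_right u x)).ne' hx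
  have hpack : IsTwoPacking G (insert s(u, x) (insert s(v, y) (R.erase s(u, v)))) := by
    refine isTwoPacking_iff.mpr ⟨?_, fun w => ?_⟩
    · simp only [coe_insert, coe_erase]
      exact Set.insert_subset hux (Set.insert_subset hvy (Set.sdiff_subset.trans hR₂.1))
    · have h₁ := edgeDegree_insert hvy_notMem w
      have h₂ := edgeDegree_insert hux_notMem w
      have h₃ := edgeDegree_insert (notMem_erase s(u, v) R) w
      rw [insert_erase he] at h₃
      have h₄ := hR₂.edgeDegree_le_two w
      simp only [Sym2.mem_iff] at h₁ h₂ h₃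
      split_ifs at h₁ h₂ h₃ <;> grind
  have := hR.card_le _ hpack
  rw [card_insert_of_notMem hux_notMem, card_insert_of_notMem hvy_notMem,
    card_erase_of_mem he] at this
  have := card_pos.mpr ⟨_, he⟩
  omega

end IsTwoPacking

section Matching

variable [DecidableEq V] {I : Finset V} {p : V → V} {e₁ e₂ : Sym2 V}

lemma card_image_mk_of_notMem (hp : ∀ v ∈ I, p v ∉ I) : #(I.image fun v => s(v, p v)) = #I := by
  refine card_image_of_injOn fun v hv w hw hvw => ?_
  rcases Sym2.eq_iff.mp hvw with ⟨h, -⟩ | ⟨h, -⟩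
  · exact h
  · exact absurd (h ▸ hv) (hp w hw)

lemma edgeDegree_image_mk_le_one (hinj : Set.InjOn p I) (hp : ∀ v ∈ I, p v ∉ I) (w : V) :
    edgeDegree (I.image fun v => s(v, p v)) w ≤ 1 := by
  refine card_le_one.mpr fun _ h₁ _ h₂ => ?_
  simp only [mem_filter, mem_image] at h₁ h₂
  obtain ⟨⟨v₁, hv₁, rfl⟩, hw₁⟩ := h₁
  obtain ⟨⟨v₂, hv₂, rfl⟩, hw₂⟩ := h₂
  rw [Sym2.mem_iff] at hw₁ hw₂
  have : v₁ = v₂ := by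
    rcases hw₁ with rfl | rfl <;> rcases hw₂ with h | h
    · exact h
    · exact absurd (h ▸ hv₁) (hp v₂ hv₂)
    · exact absurd (h ▸ hv₂) (hp v₁ hv₁)
    · exact hinj hv₁ hv₂ h
  rw [this]

lemma edgeDegree_pair_le_one (h : ∀ v ∈ e₁, v ∉ e₂) (w : V) : edgeDegree {e₁, e₂} w ≤ 1 := by
  refine card_le_one.mpr fun f₁ h₁ f₂ h₂ => ?_
  simp only [mem_filter, mem_insert, mem_singleton] at h₁ h₂
  rcases h₁ with ⟨rfl | rfl, hw₁⟩ <;> rcases h₂ with ⟨rfl | rfl, hw₂⟩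
  all_goals first | rfl | exact absurd hw₂ (h w hw₁) | exact absurd hw₁ (h w hw₂)

end Matching

section Connected

variable [Fintype V] [DecidableEq V] {G : SimpleGraph V} {R : Finset (Sym2 V)} {a b : V}

lemma IsTwoPacking.card_edgeDegree_one_add_two_mul_card_edgeDegree_two (hR : IsTwoPacking G R) :
    #{v | edgeDegree R v = 1} + 2 * #{v | edgeDegree R v = 2} = 2 * #R := by
  rw [← sum_edgeDegree fun e he => G.not_isDiag_of_mem_edgeSet (hR.1 he), card_filter,
    card_filter, mul_sum, ← sum_add_distrib]
  refine sum_congr rfl fun v _ => ?_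
  have := hR.edgeDegree_le_two v
  split_ifs <;> omega

lemma IsTwoPacking.card_edgeDegree_pos_eq_add (hR : IsTwoPacking G R) :
    #{v | 0 < edgeDegree R v} = #{v | edgeDegree R v = 1} + #{v | edgeDegree R v = 2} := by
  rw [card_filter, card_filter, card_filter, ← sum_add_distrib]
  refine sum_congr rfl fun v _ => ?_
  have := hR.edgeDegree_le_two v
  split_ifs <;> omega

lemma IsTwoPacking.card_edgeDegree_pos_le_card_add_one (hR : IsTwoPacking G R)
    (hRconn : (edgeInducedSubgraph G ↑R).Connected) : #{v | 0 < edgeDegree R v} ≤ #R + 1 := by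
  set H := edgeInducedSubgraph G ↑R
  have hverts : H.verts = ↑({v | 0 < edgeDegree R v} : Finset V) := by
    ext v
    simp [H, mem_edgeInducedSubgraph_verts_iff hR.1]
  have hedges : H.edgeSet ⊆ ↑R := fun e he => by
    induction e using Sym2.ind
    exact he.1
  have hcard_verts : Nat.card H.verts = #{v | 0 < edgeDegree R v} := by
    rw [Nat.card_coe_set_eq, hverts, Set.ncard_coe_finset]
  have hcard_edges : Nat.card H.coe.edgeSet ≤ #R := by
    rw [Nat.card_coe_set_eq, ← Set.ncard_image_of_injective _
      (Sym2.map.injective Subtype.val_injective), SimpleGraph.Subgraph.image_coe_edgeSet_coe,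
      ← Set.ncard_coe_finset]
    exact Set.ncard_le_ncard hedges R.finite_toSet
  have := hRconn.coe.card_vert_le_card_edgeSet_add_one
  omega

lemma IsTwoPacking.card_le_card_of_closed (hR : IsTwoPacking G R)
    (hRconn : (edgeInducedSubgraph G ↑R).Connected) {T : Finset V}
    (hT : ∀ a b, s(a, b) ∈ R → a ∈ T → b ∈ T) (haT : a ∈ T) (ha : 0 < edgeDegree R a) :
    #R ≤ #T := by
  have hsub : ({v | 0 < edgeDegree R v} : Finset V) ⊆ T := by
    intro v hv
    have := hRconn.verts_subset_of_adj_closed (T := ↑T) (fun a b hab => hT a b hab.1)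
      ((mem_edgeInducedSubgraph_verts_iff hR.1).mpr ha) haT
    exact this ((mem_edgeInducedSubgraph_verts_iff hR.1).mpr (mem_filter.mp hv).2)
  have := card_le_card hsub
  have := hR.card_edgeDegree_one_add_two_mul_card_edgeDegree_two
  have := hR.card_edgeDegree_pos_eq_add
  omega

lemma IsTwoPacking.card_le_three_of_triangle (hR : IsTwoPacking G R)
    (hRconn : (edgeInducedSubgraph G ↑R).Connected) {x y z : V} (hxy : s(x, y) ∈ R)
    (hxz : s(x, z) ∈ R) (hyz : s(y, z) ∈ R) : #R ≤ 3 := by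
  have hxy' : x ≠ y := (hR.adj hxy).ne
  have hxz' : x ≠ z := (hR.adj hxz).ne
  have hyz' : y ≠ z := (hR.adj hyz).ne
  have hT : ∀ a b, s(a, b) ∈ R → a ∈ ({x, y, z} : Finset V) → b ∈ ({x, y, z} : Finset V) := by
    intro a b hab ha
    simp only [mem_insert, mem_singleton] at ha ⊢
    rcases ha with rfl | rfl | rfl
    · have := eq_or_eq_of_edgeDegree_le_two (hR.edgeDegree_le_two a) hyz' hxy hxz hab
      tauto
    · have := eq_or_eq_of_edgeDegree_le_two (hR.edgeDegree_le_two a) hxz'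
        (Sym2.eq_swap ▸ hxy) hyz hab
      tauto
    · have := eq_or_eq_of_edgeDegree_le_two (hR.edgeDegree_le_two a) hxy'
        (Sym2.eq_swap ▸ hxz) (Sym2.eq_swap ▸ hyz) hab
      tauto
  exact (hR.card_le_card_of_closed hRconn hT (mem_insert_self x _)
    (edgeDegree_pos hxy (Sym2.mem_mk_left x y))).trans card_le_three

lemma IsMaximumTwoPacking.edgeDegree_eq_two_of_adj (hR : IsMaximumTwoPacking G R)
    (hRconn : (edgeInducedSubgraph G ↑R).Connected) (hk : 2 < #R) (ha : edgeDegree R a ≤ 1)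
    (hab : G.Adj a b) : edgeDegree R b = 2 := by
  by_cases hmem : s(a, b) ∈ R
  · by_contra hb
    have hb₁ : edgeDegree R b ≤ 1 := by have := hR.isTwoPacking.edgeDegree_le_two b; omega
    have hT : ∀ x y, s(x, y) ∈ R → x ∈ ({a, b} : Finset V) → y ∈ ({a, b} : Finset V) := by
      intro x y hxy hx
      rcases mem_insert.mp hx with rfl | hx
      · simp [eq_of_edgeDegree_le_one ha hxy hmem]
      · obtain rfl := mem_singleton.mp hx
        simp [eq_of_edgeDegree_le_one hb₁ hxy (Sym2.eq_swap ▸ hmem)]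
    have := hR.isTwoPacking.card_le_card_of_closed hRconn hT (mem_insert_self a {b})
      (edgeDegree_pos hmem (Sym2.mem_mk_left a b))
    have := card_le_two (a := a) (b := b)
    omega
  · exact (hR.edgeDegree_eq_two_of_adj_of_notMem hab hmem).resolve_left (by omega)

lemma IsTwoPacking.exists_disjoint_of_two_lt_card (hR : IsTwoPacking G R)
    (hRconn : (edgeInducedSubgraph G ↑R).Connected) (hk : 3 < #R) {E : Finset (Sym2 V)}
    (hE : E ⊆ R) (h : 2 < #E) : ∃ e₁ ∈ E, ∃ e₂ ∈ E, ∀ v ∈ e₁, v ∉ e₂ := by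
  by_contra! hmeet
  obtain ⟨e₁, h₁, e₂, h₂, e₃, h₃, h₁₂, h₁₃, h₂₃⟩ := two_lt_card.mp h
  have hthree : ∀ v ∈ e₁, v ∈ e₂ → v ∉ e₃ := fun v hv₁ hv₂ hv₃ => by
    rcases hR.2 _ (hE h₁) _ (hE h₂) _ (hE h₃) v hv₁ hv₂ hv₃ with h | h | h <;> contradiction
  obtain ⟨x, hx₁, hx₂⟩ := hmeet e₁ h₁ e₂ h₂
  obtain ⟨y, hy₁, hy₃⟩ := hmeet e₁ h₁ e₃ h₃
  obtain ⟨z, hz₂, hz₃⟩ := hmeet e₂ h₂ e₃ h₃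
  have hxy : x ≠ y := by rintro rfl; exact hthree x hx₁ hx₂ hy₃
  have hxz : x ≠ z := by rintro rfl; exact hthree x hx₁ hx₂ hz₃
  have hyz : y ≠ z := by rintro rfl; exact hthree y hy₁ hz₂ hy₃
  obtain rfl := (Sym2.mem_and_mem_iff hxy).mp ⟨hx₁, hy₁⟩
  obtain rfl := (Sym2.mem_and_mem_iff hxz).mp ⟨hx₂, hz₂⟩
  obtain rfl := (Sym2.mem_and_mem_iff hyz).mp ⟨hy₃, hz₃⟩
  have := hR.card_le_three_of_triangle hRconn (hE h₁) (hE h₂) (hE h₃)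
  omega

lemma IsTwoPacking.card_le_card_filter_edgeDegree_two_add (hR : IsTwoPacking G R) :
    #R ≤ #{e ∈ R | ∀ v ∈ e, edgeDegree R v = 2} + #{v | edgeDegree R v = 1} := by
  have hcover := card_le_sum_edgeDegree (filter_subset (fun e => ¬ ∀ v ∈ e, edgeDegree R v = 2) R)
    (T := {v | edgeDegree R v = 1}) fun e he => by
      obtain ⟨he, v, hv, hv₂⟩ := by simpa using he
      have := hR.edgeDegree_le_two v
      have := edgeDegree_pos he hv
      exact ⟨v, mem_filter.mpr ⟨mem_univ v, by omega⟩, hv⟩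
  rw [sum_congr rfl fun v hv => (mem_filter.mp hv).2, sum_const, smul_eq_mul, mul_one] at hcover
  have := card_filter_add_card_filter_not (s := R) fun e => ∀ v ∈ e, edgeDegree R v = 2
  omega

lemma IsMaximumTwoPacking.exists_isDominatingSet_of_card_edgeDegree_one_eq_zero
    (hR : IsMaximumTwoPacking G R) (hRconn : (edgeInducedSubgraph G ↑R).Connected)
    (hk : 5 ≤ #R) (hnbr : ∀ w, ∃ y, G.Adj w y) (hn₁ : #{v | edgeDegree R v = 1} = 0) :
    ∃ D : Finset V, IsDominatingSet G D ∧ #D + 2 ≤ #R := by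
  classical
  have hR₂ := hR.isTwoPacking
  have hdeg : ∀ v, edgeDegree R v = 0 ∨ edgeDegree R v = 2 := fun v => by
    have := filter_eq_empty_iff.mp (card_eq_zero.mp hn₁) (mem_univ v)
    have := hR₂.edgeDegree_le_two v
    omega
  have hn₂ : #{v | edgeDegree R v = 2} = #R := by
    have := hR₂.card_edgeDegree_one_add_two_mul_card_edgeDegree_two
    omega
  set T : Finset V := {v | edgeDegree R v = 2 ∧ ∀ x, G.Adj v x → edgeDegree R x ≠ 0}
  have hcover : ∀ e ∈ R, ∃ t ∈ T, t ∈ e := fun e he => by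
    obtain ⟨t, hte, ht⟩ := hR.exists_mem_forall_adj_edgeDegree_ne_zero he
    exact ⟨t, by simpa [T, (hdeg t).resolve_left (edgeDegree_pos he hte).ne'] using ht, hte⟩
  obtain ⟨a, ha, b, hb, hab⟩ :=
    one_lt_card.mp (by have := hR₂.card_le_two_mul_card_of_forall_exists_mem hcover; omega : 1 < #T)
  simp only [T, mem_filter, mem_univ, true_and] at ha hb
  refine ⟨({v | edgeDegree R v = 2} : Finset V) \ {a, b}, fun w => ?_, ?_⟩
  · by_cases hw : w ∈ ({v | edgeDegree R v = 2} : Finset V) \ {a, b}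
    · exact .inl hw
    refine .inr ?_
    simp only [mem_sdiff, mem_filter, mem_univ, true_and, mem_insert, mem_singleton,
      not_and, not_not] at hw ⊢
    rcases hdeg w with hw₀ | hw₂
    · obtain ⟨y, hwy⟩ := hnbr w
      have hy := hR.edgeDegree_eq_two_of_adj hRconn (by omega) (by omega) hwy
      refine ⟨y, ⟨hy, ?_⟩, hwy.symm⟩
      rintro (rfl | rfl)
      exacts [ha.2 w hwy.symm hw₀, hb.2 w hwy.symm hw₀]
    · obtain ⟨c, d, hcd, hc, hd⟩ := exists_ne_of_edgeDegree_eq_two hw₂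
      have hc₂ := (hdeg c).resolve_left (edgeDegree_pos hc (Sym2.mem_mk_right w c)).ne'
      have hd₂ := (hdeg d).resolve_left (edgeDegree_pos hd (Sym2.mem_mk_right w d)).ne'
      have hwc := (hR₂.adj hc).ne
      have hwd := (hR₂.adj hd).ne
      have hwab := hw hw₂
      by_cases hcab : c = a ∨ c = b
      · exact ⟨d, ⟨hd₂, by grind⟩, (hR₂.adj hd).symm⟩
      · exact ⟨c, ⟨hc₂, hcab⟩, (hR₂.adj hc).symm⟩
  · rw [card_sdiff_of_subset (by simp [insert_subset_iff, ha.1, hb.1]), card_pair hab]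
    omega

lemma IsMaximumTwoPacking.exists_isDominatingSet_of_forall_adj_exists_ne
    (hR : IsMaximumTwoPacking G R) (hRconn : (edgeInducedSubgraph G ↑R).Connected)
    (hk : 5 ≤ #R) (hnbr : ∀ w, ∃ y, G.Adj w y) (hn₂ : #{v | edgeDegree R v = 2} + 1 = #R)
    {v₀ : V} (hv₀ : edgeDegree R v₀ = 2) (hpend : ∀ x, G.Adj x v₀ → ∃ y, G.Adj x y ∧ y ≠ v₀) :
    ∃ D : Finset V, IsDominatingSet G D ∧ #D + 2 ≤ #R := by
  have hR₂ := hR.isTwoPacking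
  obtain ⟨z, hv₀z, hz⟩ : ∃ z, G.Adj v₀ z ∧ edgeDegree R z = 2 := by
    obtain ⟨c, d, hcd, hc, hd⟩ := exists_ne_of_edgeDegree_eq_two hv₀
    by_contra! hz
    have hc₁ : edgeDegree R c ≤ 1 := by
      have := hR₂.edgeDegree_le_two c; have := hz c (hR₂.adj hc); omega
    have hd₁ : edgeDegree R d ≤ 1 := by
      have := hR₂.edgeDegree_le_two d; have := hz d (hR₂.adj hd); omega
    have hT : ∀ a b, s(a, b) ∈ R → a ∈ ({v₀, c, d} : Finset V) → b ∈ ({v₀, c, d} : Finset V) := by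
      intro a b hab ha
      simp only [mem_insert, mem_singleton] at ha ⊢
      rcases ha with rfl | rfl | rfl
      · have := eq_or_eq_of_edgeDegree_le_two (hR₂.edgeDegree_le_two a) hcd hc hd hab
        tauto
      · exact .inl (eq_of_edgeDegree_le_one hc₁ hab (Sym2.eq_swap ▸ hc))
      · exact .inl (eq_of_edgeDegree_le_one hd₁ hab (Sym2.eq_swap ▸ hd))
    have := hR₂.card_le_card_of_closed hRconn hT (mem_insert_self v₀ _) (by omega)
    have := card_le_three (a := v₀) (b := c) (c := d)
    omega
  refine ⟨({v | edgeDegree R v = 2} : Finset V).erase v₀, fun w => ?_, ?_⟩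
  · by_cases hw : w ∈ ({v | edgeDegree R v = 2} : Finset V).erase v₀
    · exact .inl hw
    refine .inr ?_
    by_cases hwv₀ : w = v₀
    · subst hwv₀
      exact ⟨z, by simp [hz, hv₀z.ne'], hv₀z.symm⟩
    have hw₁ : edgeDegree R w ≤ 1 := by
      simp only [mem_erase, mem_filter, mem_univ, true_and, not_and] at hw
      have := hR₂.edgeDegree_le_two w
      have := hw hwv₀
      omega
    obtain ⟨y, hwy, hy⟩ : ∃ y, G.Adj w y ∧ y ≠ v₀ := by
      obtain ⟨y, hwy⟩ := hnbr w
      by_cases hy : y = v₀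
      · exact hpend w (hy ▸ hwy)
      · exact ⟨y, hwy, hy⟩
    exact ⟨y, by simp [hy, hR.edgeDegree_eq_two_of_adj hRconn (by omega) hw₁ hwy], hwy.symm⟩
  · rw [card_erase_of_mem (by simp [hv₀])]
    omega

lemma IsMaximumTwoPacking.exists_edgeDegree_eq_two_forall_adj_exists_ne
    (hR : IsMaximumTwoPacking G R) (hRconn : (edgeInducedSubgraph G ↑R).Connected) (hk : 5 ≤ #R)
    (hn₁ : #{v | edgeDegree R v = 1} = 2) (hn₂ : #{v | edgeDegree R v = 2} + 1 = #R) :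
    ∃ v₀, edgeDegree R v₀ = 2 ∧ ∀ x, G.Adj x v₀ → ∃ y, G.Adj x y ∧ y ≠ v₀ := by
  by_contra! h
  choose! p hp using h
  have hR₂ := hR.isTwoPacking
  set I : Finset V := {v | edgeDegree R v = 2}
  have hpI : ∀ v ∈ I, p v ∉ I := fun v hv hpv => by
    obtain ⟨c, d, hcd, hc, hd⟩ := exists_ne_of_edgeDegree_eq_two (mem_filter.mp hpv).2
    have hpv := (hp v (mem_filter.mp hv).2).2
    exact hcd ((hpv c (hR₂.adj hc)).trans (hpv d (hR₂.adj hd)).symm)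
  have hinj : Set.InjOn p I := fun v hv w hw hvw =>
    (hp w (mem_filter.mp hw).2).2 v (hvw ▸ (hp v (mem_filter.mp hv).2).1)
  have hM : (↑(I.image fun v => s(v, p v)) : Set (Sym2 V)) ⊆ G.edgeSet := by
    rw [coe_image]
    rintro _ ⟨v, hv, rfl⟩
    exact (hp v (mem_filter.mp hv).2).1.symm
  have := hR₂.card_le_card_filter_edgeDegree_two_add
  obtain ⟨e₁, he₁, e₂, he₂, hdisj⟩ := hR₂.exists_disjoint_of_two_lt_card hRconn (by omega)
    (filter_subset (fun e => ∀ v ∈ e, edgeDegree R v = 2) R) (by omega)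
  rw [mem_filter] at he₁ he₂
  have hN : (↑({e₁, e₂} : Finset (Sym2 V)) : Set (Sym2 V)) ⊆ G.edgeSet := by
    simpa [Set.insert_subset_iff] using ⟨hR₂.1 he₁.1, hR₂.1 he₂.1⟩
  have hMN : Disjoint (I.image fun v => s(v, p v)) {e₁, e₂} := by
    simp only [disjoint_left, mem_image, mem_insert, mem_singleton]
    rintro _ ⟨v, hv, rfl⟩ (he | he)
    exacts [hpI v hv (by simpa [I] using he₁.2 _ (he ▸ Sym2.mem_mk_right v (p v))),
      hpI v hv (by simpa [I] using he₂.2 _ (he ▸ Sym2.mem_mk_right v (p v)))]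
  have h₁₂ : e₁ ≠ e₂ := by
    rintro rfl
    exact hdisj _ (Sym2.out_fst_mem e₁) (Sym2.out_fst_mem e₁)
  have := hR.card_le _ (isTwoPacking_union hM hN (edgeDegree_image_mk_le_one hinj hpI)
    (edgeDegree_pair_le_one hdisj))
  rw [card_union_of_disjoint hMN, card_image_mk_of_notMem hpI, card_pair h₁₂] at this
  omega

lemma IsMaximumTwoPacking.exists_isDominatingSet (hR : IsMaximumTwoPacking G R)
    (hconn : G.Connected) (hRconn : (edgeInducedSubgraph G ↑R).Connected) (hk : 5 ≤ #R) :
    ∃ D : Finset V, IsDominatingSet G D ∧ #D + 2 ≤ #R := by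
  have hnbr : ∀ w, ∃ y, G.Adj w y := by
    obtain ⟨e, he⟩ := card_pos.mp (by omega : 0 < #R)
    induction e using Sym2.ind with | h a b => ?_
    have : Nontrivial V := ⟨a, b, (hR.isTwoPacking.adj he).ne⟩
    exact hconn.preconnected.exists_adj_of_nontrivial
  have := hR.isTwoPacking.card_edgeDegree_one_add_two_mul_card_edgeDegree_two
  have := hR.isTwoPacking.card_edgeDegree_pos_eq_add
  have := hR.isTwoPacking.card_edgeDegree_pos_le_card_add_one hRconn
  -- `G[R]` is a cycle (no leaves) or a path (two leaves)
  obtain hn₁ | hn₁ : #{v | edgeDegree R v = 1} = 0 ∨ #{v | edgeDegree R v = 1} = 2 := by omega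
  · exact hR.exists_isDominatingSet_of_card_edgeDegree_one_eq_zero hRconn hk hnbr hn₁
  · obtain ⟨v₀, hv₀, hpend⟩ :=
      hR.exists_edgeDegree_eq_two_forall_adj_exists_ne hRconn hk hn₁ (by omega)
    exact hR.exists_isDominatingSet_of_forall_adj_exists_ne hRconn hk hnbr (by omega) hv₀ hpend

end Connected

end TwoPacking

theorem dominationNumber_le_of_connected_edgeInduced_general {V : Type*} [Fintype V]
    (G : SimpleGraph V) (hconn : G.Connected)
    (hnu : 5 ≤ twoPackingNumber G)
    (R : Finset (Sym2 V)) (hR : IsTwoPacking G R)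
    (hmax : R.card = twoPackingNumber G)
    (hRconn : (edgeInducedSubgraph G ↑R).Connected) :
    dominationNumber G ≤ twoPackingNumber G - 2 := by
  classical
  have hRmax : IsMaximumTwoPacking G R :=
    ⟨hR, fun _ hR' => hmax ▸ hR'.card_le_twoPackingNumber⟩
  obtain ⟨D, hD, hcard⟩ := hRmax.exists_isDominatingSet hconn hRconn (hmax ▸ hnu)
  calc dominationNumber G ≤ #D := Nat.sInf_le ⟨D, hD, rfl⟩
    _ ≤ twoPackingNumber G - 2 := by omega

/-- If `G` is a finite connected graph with `|E(G)| > ν₂(G)` and `ν₂(G) ≥ 5`,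
and `R` is a maximum 2-packing of `G` such that `G[R]` is connected, then
`γ(G) ≤ ν₂(G) - 2`. -/
theorem dominationNumber_le_of_connected_edgeInduced {V : Type*} [Fintype V]
    (G : SimpleGraph V) (hconn : G.Connected)
    (hE : twoPackingNumber G < G.edgeSet.ncard)
    (hnu : 5 ≤ twoPackingNumber G)
    (R : Finset (Sym2 V)) (hR : IsTwoPacking G R)
    (hmax : R.card = twoPackingNumber G)
    (hRconn : (edgeInducedSubgraph G ↑R).Connected) :
    dominationNumber G ≤ twoPackingNumber G - 2 :=
  dominationNumber_le_of_connected_edgeInduced_general G hconn hnu R hR hmax hRconn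
end

section
/- Let G be a finite connected graph with |E(G)| > ν₂(G). If γ(G) = 1 and ν₂(G) = 2, then G is isomorphic to the star K_{1,n} for some integer n ≥ 3. -/
/-- If `G` is a finite connected graph with `|E(G)| > ν₂(G)`, `γ(G) = 1` and
`ν₂(G) = 2`, then `G` is isomorphic to the star `K_{1,n}` for some `n ≥ 3`. -/
theorem isoStar_of_dominationNumber_eq_one {V : Type*} [Fintype V]
    (G : SimpleGraph V) (hconn : G.Connected)
    (hE : twoPackingNumber G < G.edgeSet.ncard)
    (hgamma : dominationNumber G = 1) (hnu : twoPackingNumber G = 2) :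
    ∃ n : ℕ, 3 ≤ n ∧ Nonempty (G ≃g completeBipartiteGraph (Fin 1) (Fin n)) := by
  classical
  -- extract the dominating vertex c
  have h1 : (1 : ℕ) ∈ {n | ∃ D : Finset V, IsDominatingSet G D ∧ D.card = n} := by
    rw [← hgamma]
    apply Nat.sInf_mem
    exact ⟨(Finset.univ : Finset V).card, Finset.univ,
      fun v => Or.inl (Finset.mem_univ v), rfl⟩
  obtain ⟨D, hD, hcard⟩ := h1
  obtain ⟨c, rfl⟩ := Finset.card_eq_one.mp hcard
  have hdom : ∀ v : V, v ≠ c → G.Adj c v := by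
    intro v hv
    rcases hD v with h | ⟨u, hu, huv⟩
    · exact absurd (Finset.mem_singleton.mp h) hv
    · rwa [Finset.mem_singleton.mp hu] at huv
  -- no edge avoids c
  have hnoedge : ∀ a b : V, a ≠ c → b ≠ c → ¬ G.Adj a b := by
    intro a b ha hb hab
    have hab' : a ≠ b := hab.ne
    have hca := hdom a ha
    have hcb := hdom b hb
    set R : Finset (Sym2 V) := {s(c,a), s(c,b), s(a,b)} with hR
    have hpack : IsTwoPacking G R := by
      constructor
      · intro e he
        simp only [hR, Finset.coe_insert, Finset.coe_singleton, Set.mem_insert_iff,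
          Set.mem_singleton_iff] at he
        rcases he with rfl | rfl | rfl
        · exact hca
        · exact hcb
        · exact hab
      · intro e1 he1 e2 he2 e3 he3 v hv1 hv2 hv3
        simp only [hR, Finset.mem_insert, Finset.mem_singleton] at he1 he2 he3
        rcases he1 with rfl|rfl|rfl <;> rcases he2 with rfl|rfl|rfl <;>
          rcases he3 with rfl|rfl|rfl <;>
          simp only [Sym2.mem_iff] at hv1 hv2 hv3 <;>
          rcases hv1 with rfl|rfl <;> rcases hv2 with h2|h2 <;>
          rcases hv3 with h3|h3 <;> simp_all
    have h12 : s(c,a) ≠ s(c,b) := by simp [Sym2.eq_iff]; tauto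
    have h13 : s(c,a) ≠ s(a,b) := by simp [Sym2.eq_iff]; tauto
    have h23 : s(c,b) ≠ s(a,b) := by simp [Sym2.eq_iff]; tauto
    have hcard3 : R.card = 3 := by
      rw [hR, Finset.card_insert_of_notMem (by simp [h12, h13]),
        Finset.card_insert_of_notMem (by simp [h23]), Finset.card_singleton]
    have hbdd : BddAbove {n | ∃ R : Finset (Sym2 V), IsTwoPacking G R ∧ R.card = n} := by
      refine ⟨Fintype.card (Sym2 V), ?_⟩
      rintro n ⟨R', _, rfl⟩
      exact Finset.card_le_univ R'
    have h3 : 3 ≤ sSup {n | ∃ R : Finset (Sym2 V), IsTwoPacking G R ∧ R.card = n} :=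
      le_csSup hbdd ⟨R, hpack, hcard3⟩
    rw [twoPackingNumber] at hnu
    omega
  -- adjacency characterization
  have hadj : ∀ u v : V, G.Adj u v ↔ (u = c ∧ v ≠ c) ∨ (v = c ∧ u ≠ c) := by
    intro u v
    constructor
    · intro h
      by_cases hu : u = c
      · subst hu; exact Or.inl ⟨rfl, h.ne'⟩
      · by_cases hv : v = c
        · subst hv; exact Or.inr ⟨rfl, hu⟩
        · exact absurd h (hnoedge u v hu hv)
    · rintro (⟨rfl, hv⟩ | ⟨rfl, hu⟩)
      · exact hdom v hv
      · exact (hdom u hu).symm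
  -- edge set is the star edges
  have hedge : G.edgeSet = (fun v : V => s(c, v)) '' {v | v ≠ c} := by
    ext e
    induction e using Sym2.ind with
    | _ u v =>
      rw [SimpleGraph.mem_edgeSet, hadj]
      constructor
      · rintro (⟨rfl, hv⟩ | ⟨rfl, hu⟩)
        · exact ⟨v, hv, rfl⟩
        · exact ⟨u, hu, Sym2.eq_swap⟩
      · rintro ⟨w, hw, heq⟩
        rw [Sym2.eq_iff] at heq
        rcases heq with ⟨rfl, rfl⟩ | ⟨rfl, rfl⟩
        · exact Or.inl ⟨rfl, hw⟩
        · exact Or.inr ⟨rfl, hw⟩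
  have hinj : Set.InjOn (fun v : V => s(c, v)) {v | v ≠ c} := by
    intro x hx y hy h
    simp only [Sym2.eq_iff] at h
    tauto
  set n := Fintype.card {v : V // v ≠ c} with hn
  have hncard : G.edgeSet.ncard = n := by
    rw [hedge, Set.ncard_image_of_injOn hinj, hn]
    rw [← Nat.card_coe_set_eq, Nat.card_eq_fintype_card]
    rfl
  have hn3 : 3 ≤ n := by
    rw [hncard] at hE
    omega
  -- build the isomorphism
  haveI : Subsingleton {v : V // v = c} := ⟨fun a b => Subtype.ext (a.2.trans b.2.symm)⟩
  let e1 : {v : V // v = c} ≃ Fin 1 :=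
    equivOfSubsingletonOfSubsingleton (fun _ => 0) (fun _ => ⟨c, rfl⟩)
  let e2 : {v : V // v ≠ c} ≃ Fin n := Fintype.equivFin _
  let φ : V ≃ Fin 1 ⊕ Fin n :=
    (Equiv.sumCompl (· = c)).symm.trans (e1.sumCongr e2)
  refine ⟨n, hn3, ⟨⟨φ, fun {a b} => ?_⟩⟩⟩
  rw [hadj a b]
  by_cases ha : a = c <;> by_cases hb : b = c <;>
    simp [φ, Equiv.sumCompl, ha, hb]
end
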